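/- Let H ∈ (0,1), r ≥ 1, and let a₀, …, a_q be real numbers satisfying Σ_{k=0}^q a_k k^i = 0 for every i = 0, 1, …, r−1 (a filter of order r). If H ∈ (0, 3/4) or r ≥ 2, then Σ_{n=1}^∞ ρ_H^a(n)² < ∞, where ρ_H^a(n) = −(1/2) Σ_{k=0}^q Σ_{j=0}^q a_k a_j |n + k − j|^{2H}. -/

import Mathlib

/-!
Let `E` be the shift `G ↦ G (· + 1)` on real functions, so that `E - 1` is the forward
difference `Δ`. A filter `a` of order `r` has generating polynomial `A = Σ aₖ Xᵏ` divisible by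
`(X - 1)ʳ`, and so does its reversal `Ã`. For large `x` the double sum defining `ρ_H^a` is
`(A(E) Ã(E) g)(x - q)` with `g t = t ^ 2H`, that is `(D(E) Δ²ʳ g)(x - q)` for a polynomial `D`.
Iterating the mean value theorem gives `Δⁿ (t ↦ tᵖ) = O(t^(p - n))`, hence
`ρ_H^a(n) = O(n^(2H - 2r))`, and under either hypothesis `4H - 4r < -1`.
-/

open Real Polynomial Finset Filter Asymptotics
open scoped fwdDiff

def IsFilterOfOrder (r q : ℕ) (a : ℕ → ℝ) : Prop :=
  ∀ i < r, ∑ k ∈ range (q + 1), a k * (k : ℝ) ^ i = 0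

noncomputable def filterPoly (q : ℕ) (a : ℕ → ℝ) : ℝ[X] :=
  ∑ k ∈ range (q + 1), C (a k) * X ^ k

namespace IsFilterOfOrder

variable {r q : ℕ} {a : ℕ → ℝ}

theorem sum_mul_eval_eq_zero (ha : IsFilterOfOrder r q a) {Q : ℝ[X]} (hQ : Q.natDegree < r) :
    ∑ k ∈ range (q + 1), a k * Q.eval (k : ℝ) = 0 := by
  simp_rw [eval_eq_sum_range, mul_sum]
  rw [sum_comm]
  refine sum_eq_zero fun i hi => ?_
  simp_rw [mul_left_comm (a _), ← mul_sum]
  rw [ha i (by rw [mem_range] at hi; omega), mul_zero]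

theorem reflect (ha : IsFilterOfOrder r q a) : IsFilterOfOrder r q (fun k => a (q - k)) := by
  intro i hi
  rw [← sum_range_reflect]
  have hQ : ((C (q : ℝ) - X) ^ i).natDegree < r :=
    (natDegree_pow_le_of_le (m := 1) i ((natDegree_sub_le _ _).trans (by simp))).trans_lt
      (by omega)
  convert ha.sum_mul_eval_eq_zero hQ using 2 with k hk
  rw [mem_range] at hk
  simp [Nat.sub_sub_self (by omega : k ≤ q), Nat.cast_sub (by omega : k ≤ q)]

theorem X_sub_one_pow_dvd_filterPoly (ha : IsFilterOfOrder r q a) :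
    (X - 1) ^ r ∣ filterPoly q a := by
  rcases eq_or_ne (filterPoly q a) 0 with hA | hA
  · simp [hA]
  cases r with
  | zero => simp
  | succ m =>
    -- `(derivative^[i] A).eval 1 = Σ aₖ k (k - 1) ⋯ (k - i + 1)`, a filter sum of degree `i`
    have hroot : ∀ i ≤ m, (derivative^[i] (filterPoly q a)).IsRoot 1 := by
      intro i hi
      have hdeg : (descPochhammer ℝ i).natDegree < m + 1 := by
        rw [descPochhammer_natDegree]; omega
      simpa [IsRoot, filterPoly, iterate_derivative_sum, iterate_derivative_C_mul,
        iterate_derivative_X_pow_eq_C_mul, eval_finsetSum, descPochhammer_eval_eq_descFactorial]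
        using ha.sum_mul_eval_eq_zero hdeg
    simpa using
      (pow_dvd_pow _ (lt_rootMultiplicity_of_isRoot_iterate_derivative hA hroot)).trans
        (pow_rootMultiplicity_dvd (filterPoly q a) 1)

end IsFilterOfOrder

noncomputable def shiftEnd : Module.End ℝ (ℝ → ℝ) := LinearMap.funLeft ℝ ℝ (· + 1)

theorem shiftEnd_pow_apply (n : ℕ) (G : ℝ → ℝ) (x : ℝ) :
    (shiftEnd ^ n) G x = G (x + n) := by
  induction n generalizing G with
  | zero => simp
  | succ n ih =>
    rw [pow_succ, Module.End.mul_apply, ih, shiftEnd, LinearMap.funLeft_apply]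
    push_cast; ring_nf

theorem aeval_shiftEnd_apply (P : ℝ[X]) {N : ℕ} (hN : P.natDegree < N) (G : ℝ → ℝ)
    (x : ℝ) :
    aeval shiftEnd P G x = ∑ i ∈ range N, P.coeff i * G (x + i) := by
  simp [aeval_eq_sum_range' hN, shiftEnd_pow_apply]

theorem aeval_shiftEnd_filterPoly (q : ℕ) (a : ℕ → ℝ) (G : ℝ → ℝ) (x : ℝ) :
    aeval shiftEnd (filterPoly q a) G x = ∑ k ∈ range (q + 1), a k * G (x + k) := by
  simp [filterPoly, shiftEnd_pow_apply]

theorem aeval_shiftEnd_X_sub_one_pow (n : ℕ) (G : ℝ → ℝ) :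
    aeval shiftEnd ((X - 1 : ℝ[X]) ^ n) G = Δ_[1] ^[n] G := by
  have h : ⇑(shiftEnd - 1) = fwdDiff (1 : ℝ) := by
    ext G x; simp [shiftEnd, LinearMap.funLeft_apply, fwdDiff]
  rw [map_pow, map_sub, aeval_X, map_one, Module.End.pow_apply, h]

theorem sum_sum_mul_comp_sub_eq (q : ℕ) (a : ℕ → ℝ) (G : ℝ → ℝ) (x : ℝ) :
    ∑ k ∈ range (q + 1), ∑ j ∈ range (q + 1), a k * a j * G (x + k - j) =
      aeval shiftEnd (filterPoly q a * filterPoly q (fun j => a (q - j))) G (x - q) := by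
  rw [map_mul, Module.End.mul_apply, aeval_shiftEnd_filterPoly]
  refine sum_congr rfl fun k _ => ?_
  rw [aeval_shiftEnd_filterPoly, mul_sum, ← sum_range_reflect]
  refine sum_congr rfl fun j hj => ?_
  rw [mem_range] at hj
  rw [Nat.add_sub_cancel, Nat.cast_sub (by omega)]
  ring_nf

theorem isBigO_rpow_comp_add_const (c e : ℝ) :
    (fun t : ℝ => (t + c) ^ e) =O[atTop] fun t => t ^ e := by
  have hlim : Tendsto (fun t : ℝ => (1 + c / t) ^ e) atTop (nhds 1) := by
    have : Tendsto (fun t : ℝ => 1 + c / t) atTop (nhds 1) := by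
      simpa using (tendsto_const_nhds (x := (1 : ℝ))).add
        ((tendsto_const_nhds (x := c)).div_atTop tendsto_id)
    simpa using this.rpow_const (Or.inl one_ne_zero)
  have heq : (fun t : ℝ => t ^ e * (1 + c / t) ^ e) =ᶠ[atTop] fun t => (t + c) ^ e := by
    filter_upwards [eventually_gt_atTop 0, eventually_ge_atTop (-c)] with t ht htc
    have h1 : 1 + c / t = (t + c) / t := by field_simp
    rw [h1, ← mul_rpow ht.le (div_nonneg (by linarith) ht.le), mul_div_cancel₀ _ ht.ne']
  simpa using ((isBigO_refl (fun t : ℝ => t ^ e) atTop).mul (hlim.isBigO_one ℝ)).congr' heq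
    EventuallyEq.rfl

theorem eventually_hasDerivAt_fwdDiff_iter {F F' : ℝ → ℝ}
    (hF : ∀ᶠ t in atTop, HasDerivAt F (F' t) t) (n : ℕ) :
    ∀ᶠ t in atTop, HasDerivAt (Δ_[1] ^[n] F) (Δ_[1] ^[n] F' t) t := by
  induction n with
  | zero => simpa using hF
  | succ n ih =>
    filter_upwards [ih, (tendsto_atTop_add_const_right atTop 1 tendsto_id).eventually ih]
      with t h0 h1
    rw [Function.iterate_succ_apply', Function.iterate_succ_apply']
    exact (h1.comp_add_const t 1).sub h0

theorem rpow_le_rpow_add_rpow_of_mem_Icc {t c : ℝ} (ht : 0 < t) (hc : c ∈ Set.Icc t (t + 1))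
    (e : ℝ) : c ^ e ≤ t ^ e + (t + 1) ^ e := by
  rcases le_total 0 e with he | he
  · linarith [rpow_le_rpow (ht.le.trans hc.1) hc.2 he, rpow_nonneg ht.le e]
  · linarith [rpow_le_rpow_of_nonpos ht hc.1 he, rpow_nonneg (ht.le.trans hc.1) e,
      rpow_nonneg (by linarith : (0 : ℝ) ≤ t + 1) e]

theorem isBigO_fwdDiff_of_hasDerivAt {F F' : ℝ → ℝ} {e : ℝ}
    (hF : ∀ᶠ t in atTop, HasDerivAt F (F' t) t) (hF' : F' =O[atTop] fun t => t ^ e) :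
    Δ_[1] F =O[atTop] fun t => t ^ e := by
  obtain ⟨C, hC0, hC⟩ := hF'.exists_pos
  obtain ⟨T, hT⟩ := eventually_atTop.1 (hF.and (hC.bound.and (eventually_gt_atTop 0)))
  suffices Δ_[1] F =O[atTop] fun t => t ^ e + (t + 1) ^ e from
    this.trans ((isBigO_refl _ _).add (isBigO_rpow_comp_add_const 1 e))
  refine IsBigO.of_bound C ?_
  filter_upwards [eventually_ge_atTop T, eventually_gt_atTop 0] with t htT ht
  obtain ⟨c, hc, hslope⟩ := exists_hasDerivAt_eq_slope F F' (lt_add_one t)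
    (fun s hs => (hT s (htT.trans hs.1)).1.continuousAt.continuousWithinAt)
    (fun s hs => (hT s (htT.trans hs.1.le)).1)
  obtain ⟨-, hbound, hc0⟩ := hT c (htT.trans hc.1.le)
  have hnonneg : 0 ≤ t ^ e + (t + 1) ^ e := by positivity
  rw [add_sub_cancel_left, div_one] at hslope
  rw [fwdDiff, ← hslope]
  rw [norm_of_nonneg (rpow_nonneg hc0.le e)] at hbound
  rw [Real.norm_of_nonneg hnonneg]
  calc ‖F' c‖ ≤ C * c ^ e := hbound
    _ ≤ C * (t ^ e + (t + 1) ^ e) := by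
      gcongr
      exact rpow_le_rpow_add_rpow_of_mem_Icc ht (Set.Ioo_subset_Icc_self hc) e

theorem isBigO_fwdDiff_iter_rpow (n : ℕ) (p : ℝ) :
    Δ_[1] ^[n] (fun t : ℝ => t ^ p) =O[atTop] fun t => t ^ (p - n) := by
  induction n generalizing p with
  | zero => simpa using isBigO_refl _ _
  | succ n ih =>
    have hderiv : ∀ᶠ t in atTop, HasDerivAt (Δ_[1] ^[n] fun t : ℝ => t ^ p)
        ((p • Δ_[1] ^[n] fun t : ℝ => t ^ (p - 1)) t) t := by
      rw [← fwdDiff_iter_const_smul]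
      refine eventually_hasDerivAt_fwdDiff_iter ?_ n
      filter_upwards [eventually_gt_atTop 0] with t ht
      simpa [mul_comm] using hasDerivAt_rpow_const (p := p) (Or.inl ht.ne')
    rw [Function.iterate_succ_apply', show p - ((n + 1 : ℕ) : ℝ) = p - 1 - n by push_cast; ring]
    exact isBigO_fwdDiff_of_hasDerivAt hderiv ((ih (p - 1)).const_smul_left p)

theorem IsFilterOfOrder.isBigO_sum_sum_mul_abs_rpow {r q : ℕ} {a : ℕ → ℝ}
    (ha : IsFilterOfOrder r q a) (p : ℝ) :
    (fun x : ℝ => ∑ k ∈ range (q + 1), ∑ j ∈ range (q + 1), a k * a j * |x + k - j| ^ p)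
      =O[atTop] fun x => x ^ (p - 2 * r) := by
  obtain ⟨B, hB⟩ := ha.X_sub_one_pow_dvd_filterPoly
  obtain ⟨B', hB'⟩ := ha.reflect.X_sub_one_pow_dvd_filterPoly
  set D := B * B'
  have hprod : filterPoly q a * filterPoly q (fun j => a (q - j)) = D * (X - 1) ^ (r + r) := by
    rw [hB, hB']; ring
  have hsum : ∀ᶠ x in atTop,
      ∑ i ∈ range (D.natDegree + 1),
          D.coeff i * Δ_[1] ^[r + r] (fun t : ℝ => t ^ p) (x + ((i : ℝ) - q)) =
        ∑ k ∈ range (q + 1), ∑ j ∈ range (q + 1), a k * a j * |x + k - j| ^ p := by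
    filter_upwards [eventually_gt_atTop (q : ℝ)] with x hx
    have habs : ∀ k ∈ range (q + 1), ∀ j ∈ range (q + 1),
        |x + k - j| ^ p = (x + k - j) ^ p := by
      intro k _ j hj
      have : (j : ℝ) ≤ q := by exact_mod_cast Nat.lt_succ_iff.1 (mem_range.1 hj)
      rw [abs_of_pos (by linarith [(k.cast_nonneg : (0 : ℝ) ≤ k)])]
    simp_rw +contextual [habs]
    rw [sum_sum_mul_comp_sub_eq q a (fun t => t ^ p), hprod, map_mul, Module.End.mul_apply,
      aeval_shiftEnd_X_sub_one_pow, aeval_shiftEnd_apply D (Nat.lt_succ_self _)]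
    simp_rw [sub_add_eq_add_sub, add_sub_assoc]
  refine IsBigO.congr' ?_ hsum EventuallyEq.rfl
  refine IsBigO.fun_sum fun i _ => ?_
  have hexp : p - 2 * (r : ℝ) = p - ((r + r : ℕ) : ℝ) := by push_cast; ring
  rw [hexp]
  exact (((isBigO_fwdDiff_iter_rpow (r + r) p).comp_tendsto
    (tendsto_atTop_add_const_right _ _ tendsto_id)).trans
      (isBigO_rpow_comp_add_const _ _)).const_mul_left _

/-- For a filter `a₀,…,a_q` of order `r ≥ 1`, if `H < 3/4` or `r ≥ 2`, then the
covariances `ρ_H^a(n) = -(1/2) Σ_k Σ_j a_k a_j |n+k-j|^(2H)` of the filtered fBm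
observations are square-summable over `n ≥ 1`. -/
theorem filtered_fbm_covariance_square_summable (H : ℝ) (hH : H ∈ Set.Ioo (0:ℝ) 1)
    (r : ℕ) (hr : 1 ≤ r) (q : ℕ) (a : ℕ → ℝ)
    (ha : ∀ i : ℕ, i < r → ∑ k ∈ Finset.range (q+1), a k * (k:ℝ) ^ i = 0)
    (hcond : H < 3/4 ∨ 2 ≤ r) :
    Summable (fun n : ℕ =>
      (-(1/2) * ∑ k ∈ Finset.range (q+1), ∑ j ∈ Finset.range (q+1),
        a k * a j * |((n:ℝ) + 1) + k - j| ^ (2*H)) ^ 2) := by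
  set e := 2 * H - 2 * r
  have he : e * (2 : ℕ) < -1 := by
    have : (1 : ℝ) ≤ r := by exact_mod_cast hr
    rcases hcond with hH34 | hr2
    · push_cast; linarith
    · have : (2 : ℝ) ≤ r := by exact_mod_cast hr2
      push_cast; linarith [hH.2]
  have hshift : Tendsto (fun n : ℕ => (n : ℝ) + 1) atTop atTop :=
    tendsto_atTop_add_const_right _ 1 tendsto_natCast_atTop_atTop
  have hfilter : IsFilterOfOrder r q a := ha
  have hρ := ((hfilter.isBigO_sum_sum_mul_abs_rpow (2 * H)).comp_tendsto hshift).trans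
    ((isBigO_rpow_comp_add_const 1 e).comp_tendsto tendsto_natCast_atTop_atTop)
  refine summable_of_isBigO_nat ?_ ((hρ.const_mul_left (-(1 / 2))).pow 2)
  simpa [← rpow_mul_natCast (Nat.cast_nonneg _)] using Real.summable_nat_rpow.2 he
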